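/- Let R = K[x_1,…,x_d] be a polynomial ring over a field, 𝔞 an ideal generated by square-free monomials, t a positive integer, and φ the K-algebra endomorphism with φ(x_i) = x_i^t. Then φ(𝔞) ⊆ 𝔞, and the induced endomorphism of R/𝔞 is a pure ring homomorphism. -/

import Mathlib

open CategoryTheory MvPolynomial

/-- A ring homomorphism `φ : R → S` is *pure* if for every `R`-module `M`, the natural map
`M → S ⊗[R] M`, `m ↦ 1 ⊗ m` (with `S` viewed as an `R`-module via `φ`) is injective. -/
def RingHom.IsPure {R S : Type} [CommRing R] [CommRing S] (φ : R →+* S) : Prop :=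
  ∀ M : ModuleCat.{0} R,
    Function.Injective ((ModuleCat.extendRestrictScalarsAdj φ).unit.app M)

/-- The `K`-algebra endomorphism of `K[x_1, …, x_d]` sending each variable `x i` to `x i ^ t`. -/
noncomputable def powEndo (K : Type) [Field K] (d t : ℕ) :
    MvPolynomial (Fin d) K →+* MvPolynomial (Fin d) K :=
  (MvPolynomial.aeval fun i : Fin d => (X i : MvPolynomial (Fin d) K) ^ t).toRingHom

/-!
The map `φ = expand t` has a splitting `ψ` that sends the monomial `x^(t•a)` to `x^a` and kills
every monomial whose exponent is not divisible by `t`. It is linear for the `R`-module structure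
through `φ`, i.e. `ψ (φ f * g) = f * ψ g`, and `ψ 1 = 1`. If a square-free monomial `x^g` divides
`x^(t•a)`, then it already divides `x^a`; hence `ψ 𝔞 ⊆ 𝔞`, and `ψ` descends to a splitting of the
induced endomorphism of `R/𝔞`. A ring map with such a splitting is pure, since `ψ ⊗ M` retracts
`M → S ⊗[R] M`.
-/

theorem RingHom.isPure_of_retraction {R S : Type} [CommRing R] [CommRing S] (φ : R →+* S)
    (ψ : S →+ R) (hψ : ∀ r s, ψ (φ r * s) = r * ψ s) (hψ_one : ψ 1 = 1) : φ.IsPure := by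
  intro M
  let : Module R S := Module.compHom S φ
  let ψ' : S →ₗ[R] R := { ψ with map_smul' := hψ }
  refine Function.LeftInverse.injective (g := TensorProduct.lid R M ∘ ψ'.rTensor M) fun m => ?_
  change TensorProduct.lid R M (ψ'.rTensor M ((1 : S) ⊗ₜ m)) = m
  simp [ψ', hψ_one]

theorem Ideal.isPure_quotientMap_of_retraction {R S : Type} [CommRing R] [CommRing S]
    (φ : R →+* S) (ψ : S →+ R) (hψ : ∀ r s, ψ (φ r * s) = r * ψ s) (hψ_one : ψ 1 = 1)
    {I : Ideal R} {J : Ideal S} (hφ : I ≤ J.comap φ) (hψJ : ∀ s ∈ J, ψ s ∈ I) :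
    (Ideal.quotientMap J φ hφ).IsPure := by
  let ψbar : S ⧸ J →+ R ⧸ I := QuotientAddGroup.map J.toAddSubgroup I.toAddSubgroup ψ hψJ
  refine RingHom.isPure_of_retraction _ ψbar (fun r s => ?_)
    (congrArg (Ideal.Quotient.mk I) hψ_one)
  obtain ⟨r, rfl⟩ := Ideal.Quotient.mk_surjective r
  obtain ⟨s, rfl⟩ := Ideal.Quotient.mk_surjective s
  rw [Ideal.quotientMap_mk, ← map_mul]
  exact congrArg (Ideal.Quotient.mk I) (hψ r s)

namespace MvPolynomial

variable {σ R : Type*} [CommSemiring R] {t : ℕ}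

noncomputable def divExponents (ht : 0 < t) : MvPolynomial σ R →ₗ[R] MvPolynomial σ R :=
  (AddMonoidAlgebra.coeffLinearEquiv R).symm.toLinearMap ∘ₗ
    Finsupp.lcomapDomain (t • ·) (smul_right_injective _ ht.ne') ∘ₗ
    (AddMonoidAlgebra.coeffLinearEquiv R).toLinearMap

@[simp]
theorem coeff_divExponents (ht : 0 < t) (f : MvPolynomial σ R) (a : σ →₀ ℕ) :
    coeff a (divExponents ht f) = coeff (t • a) f := rfl

theorem divExponents_one (ht : 0 < t) : divExponents ht (1 : MvPolynomial σ R) = 1 := by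
  classical
  ext a
  simp only [coeff_divExponents, coeff_one, eq_comm (a := (0 : σ →₀ ℕ)),
    smul_eq_zero_iff_right ht.ne']

theorem divExponents_expand_mul (ht : 0 < t) (f g : MvPolynomial σ R) :
    divExponents ht (expand t f * g) = f * divExponents ht g := by
  induction f using MvPolynomial.induction_on' with
  | add p q hp hq => rw [map_add, add_mul, map_add, hp, hq, add_mul]
  | monomial b c =>
    ext a
    have hsub : t • a - t • b = t • (a - b) := by ext i; simp [Nat.mul_sub]
    simp only [expand_monomial, coeff_divExponents, coeff_monomial_mul',
      smul_le_smul_iff_of_pos_left ht, hsub]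

theorem span_monomial_le_comap_expand (ht : 0 < t) (G : Set (σ →₀ ℕ)) :
    Ideal.span ((fun g => monomial g (1 : R)) '' G) ≤
      (Ideal.span ((fun g => monomial g (1 : R)) '' G)).comap (expand t) := by
  rw [Ideal.span_le]
  rintro _ ⟨g, hg, rfl⟩
  rw [SetLike.mem_coe, Ideal.mem_comap, expand_monomial]
  refine Ideal.mem_of_dvd _ ?_ (Ideal.subset_span ⟨g, hg, rfl⟩)
  exact monomial_dvd_monomial.mpr ⟨.inr fun i => Nat.le_mul_of_pos_left _ ht, dvd_rfl⟩

theorem divExponents_mem_span_monomial_of_squarefree (ht : 0 < t) {G : Set (σ →₀ ℕ)}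
    (hG : ∀ g ∈ G, ∀ i, g i ≤ 1) {f : MvPolynomial σ R}
    (hf : f ∈ Ideal.span ((fun g => monomial g (1 : R)) '' G)) :
    divExponents ht f ∈ Ideal.span ((fun g => monomial g (1 : R)) '' G) := by
  rw [mem_ideal_span_monomial_image] at hf ⊢
  intro a ha
  obtain ⟨g, hgG, hga⟩ := hf (t • a) (by simpa using ha)
  refine ⟨g, hgG, fun i => ?_⟩
  have hgi : g i ≤ t * a i := hga i
  rcases (a i).eq_zero_or_pos with ha0 | ha0
  · simpa [ha0] using hgi
  · exact (hG g hgG i).trans ha0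

end MvPolynomial

/-- If `𝔞 ⊆ K[x_1,…,x_d]` is an ideal generated by square-free monomials and `φ` is the
`K`-algebra endomorphism with `φ(x_i) = x_i^t`, then `φ(𝔞) ⊆ 𝔞` and the induced
endomorphism of `R/𝔞` is a pure ring homomorphism. -/
theorem powEndo_quotient_isPure (K : Type) [Field K] (d t : ℕ) (ht : 0 < t)
    (G : Set (Fin d →₀ ℕ)) (hG : ∀ g ∈ G, ∀ i, g i ≤ 1)
    (𝔞 : Ideal (MvPolynomial (Fin d) K))
    (h𝔞 : 𝔞 = Ideal.span ((fun g => (monomial g (1 : K) : MvPolynomial (Fin d) K)) '' G)) :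
    (∀ f ∈ 𝔞, powEndo K d t f ∈ 𝔞) ∧
    ∀ h : 𝔞 ≤ 𝔞.comap (powEndo K d t),
      (Ideal.quotientMap 𝔞 (powEndo K d t) h).IsPure := by
  subst h𝔞
  refine ⟨fun f hf => span_monomial_le_comap_expand ht G hf, fun h => ?_⟩
  exact Ideal.isPure_quotientMap_of_retraction (powEndo K d t) (divExponents ht).toAddMonoidHom
    (divExponents_expand_mul ht) (divExponents_one ht) h
    (fun f hf => divExponents_mem_span_monomial_of_squarefree ht hG hf)
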